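/- arXiv:1801.02055 — 5 statements merged into one kernel-verified Lean document; each statement's English description precedes it below -/
import Mathlib

section
/- Let n ≥ 3 and p : Fin n → ℝ≥0 satisfy p i ≤ ∑_{j ≠ i} p j for every i. Then there exists a symmetric nonnegative n×n matrix U with zero diagonal such that the i-th row of U sums to p i for every i. -/
/-!
Place intervals `I i = [s i, s i + p i]`, `s i = ∑ j < i, p j`, end to end on a circle of circumference
`S = ∑ p`, and let `U i j` be the length of `I i ∩ (I j + S/2)`. Rotation by `S/2` is an
involution, so `U` is symmetric; the rotated intervals tile the circle, so row `i` sums to `p i`;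
and `p i ≤ S/2` means that `I i` misses its own antipode, so the diagonal vanishes. Unrolled to
the line, `I i ⊆ [0, S]` meets the rotated `I j` in its two shifts `I j ± S/2`, whence the two
terms of `antipodalOverlap`.
-/

open Finset

noncomputable section

def intervalOverlap (a b c d : ℝ) : ℝ := max 0 (min b d - max a c)

lemma intervalOverlap_nonneg (a b c d : ℝ) : 0 ≤ intervalOverlap a b c d := le_max_left _ _

lemma intervalOverlap_comm (a b c d : ℝ) : intervalOverlap a b c d = intervalOverlap c d a b := by
  rw [intervalOverlap, intervalOverlap, min_comm b, max_comm a]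

lemma intervalOverlap_add_right (a b c d t : ℝ) :
    intervalOverlap a b (c + t) (d + t) = intervalOverlap (a - t) (b - t) c d := by
  simp only [intervalOverlap, min_def, max_def]
  split_ifs <;> linarith

lemma intervalOverlap_eq_zero_of_le {a b c d : ℝ} (h : b ≤ c) : intervalOverlap a b c d = 0 :=
  max_eq_left <| by linarith [min_le_left b d, le_max_right a c]

lemma intervalOverlap_eq_sub {a b c d : ℝ} (hab : a ≤ b) (hcd : c ≤ d) :
    intervalOverlap a b c d = max a (min b d) - max a (min b c) := by
  simp only [intervalOverlap, min_def, max_def]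
  split_ifs <;> linarith

lemma sum_range_intervalOverlap {a b : ℝ} (hab : a ≤ b) {c : ℕ → ℝ} (hc : Monotone c) (m : ℕ) :
    ∑ k ∈ range m, intervalOverlap a b (c k) (c (k + 1)) =
      max a (min b (c m)) - max a (min b (c 0)) := by
  rw [← sum_range_sub (fun k => max a (min b (c k)))]
  exact sum_congr rfl fun k _ => intervalOverlap_eq_sub hab (hc k.le_succ)

section Antipodal

variable {n : ℕ} (p : Fin n → ℝ)

def partialSum (k : ℕ) : ℝ := ∑ l ∈ range k, if h : l < n then p ⟨l, h⟩ else 0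

lemma partialSum_zero : partialSum p 0 = 0 := sum_range_zero _

lemma partialSum_succ (i : Fin n) : partialSum p (i + 1) = partialSum p i + p i := by
  simp [partialSum, sum_range_succ]

lemma partialSum_monotone (hp : ∀ i, 0 ≤ p i) : Monotone (partialSum p) :=
  monotone_nat_of_le_succ fun k => by
    simp only [partialSum, sum_range_succ]
    split_ifs <;> simp [hp]

lemma partialSum_self : partialSum p n = ∑ i, p i := by
  rw [partialSum, ← Fin.sum_univ_eq_sum_range]
  simp

lemma sum_intervalOverlap_add (hp : ∀ i, 0 ≤ p i) {a b : ℝ} (hab : a ≤ b) (t : ℝ) :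
    ∑ j : Fin n, intervalOverlap a b (partialSum p j + t) (partialSum p j + p j + t) =
      max a (min b (∑ j, p j + t)) - max a (min b t) := by
  have hmono : Monotone fun k => partialSum p k + t := fun k l hkl => by
    simpa using partialSum_monotone p hp hkl
  have := sum_range_intervalOverlap hab hmono n
  simp only [partialSum_zero, zero_add, partialSum_self] at this
  rw [← this, ← Fin.sum_univ_eq_sum_range
    (fun k => intervalOverlap a b (partialSum p k + t) (partialSum p (k + 1) + t))]
  simp only [partialSum_succ]

def antipodalOverlap : Matrix (Fin n) (Fin n) ℝ :=
  Matrix.of fun i j =>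
    intervalOverlap (partialSum p i) (partialSum p i + p i)
        (partialSum p j + (∑ k, p k) / 2) (partialSum p j + p j + (∑ k, p k) / 2) +
      intervalOverlap (partialSum p i) (partialSum p i + p i)
        (partialSum p j - (∑ k, p k) / 2) (partialSum p j + p j - (∑ k, p k) / 2)

lemma antipodalOverlap_isSymm : (antipodalOverlap p).IsSymm := by
  ext i j
  simp only [Matrix.transpose_apply, antipodalOverlap, Matrix.of_apply]
  rw [add_comm]
  congr 1 <;> rw [intervalOverlap_add_right, intervalOverlap_comm]

lemma antipodalOverlap_nonneg (i j : Fin n) : 0 ≤ antipodalOverlap p i j :=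
  add_nonneg (intervalOverlap_nonneg _ _ _ _) (intervalOverlap_nonneg _ _ _ _)

lemma antipodalOverlap_diag (hp : ∀ i, p i ≤ (∑ j, p j) / 2) (i : Fin n) :
    antipodalOverlap p i i = 0 := by
  rw [antipodalOverlap, Matrix.of_apply, intervalOverlap_eq_zero_of_le (by linarith [hp i]),
    intervalOverlap_comm, intervalOverlap_eq_zero_of_le (by linarith [hp i]), add_zero]

lemma sum_antipodalOverlap (hp : ∀ i, 0 ≤ p i) (i : Fin n) : ∑ j, antipodalOverlap p i j = p i := by
  have hi := partialSum_monotone p hp (Nat.zero_le i)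
  have hS := partialSum_monotone p hp i.is_lt
  rw [partialSum_zero] at hi
  rw [partialSum_succ, partialSum_self] at hS
  simp only [antipodalOverlap, Matrix.of_apply, sum_add_distrib, sub_eq_add_neg]
  rw [sum_intervalOverlap_add p hp (by linarith [hp i]),
    sum_intervalOverlap_add p hp (by linarith [hp i])]
  have hT : 0 ≤ (∑ j, p j) / 2 := by linarith [hp i]
  rw [show ∑ j, p j + -((∑ j, p j) / 2) = (∑ j, p j) / 2 by ring,
    min_eq_left (by linarith : partialSum p i + p i ≤ ∑ j, p j + (∑ j, p j) / 2),
    max_eq_right (by linarith [hp i] : partialSum p i ≤ partialSum p i + p i),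
    min_eq_right (by linarith [hp i] : -((∑ j, p j) / 2) ≤ partialSum p i + p i),
    max_eq_left (by linarith : -((∑ j, p j) / 2) ≤ partialSum p i)]
  ring

end Antipodal

end

theorem stmt2_general (n : ℕ) (p : Fin n → ℝ) (hp : ∀ i, 0 ≤ p i)
    (hcond : ∀ i, p i ≤ ∑ j ∈ Finset.univ.erase i, p j) :
    ∃ U : Matrix (Fin n) (Fin n) ℝ,
      U.IsSymm ∧ (∀ i j, 0 ≤ U i j) ∧ (∀ i, U i i = 0) ∧ ∀ i, ∑ j, U i j = p i := by
  have hhalf : ∀ i, p i ≤ (∑ j, p j) / 2 := fun i => by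
    rw [← add_sum_erase _ _ (mem_univ i)]
    linarith [hcond i]
  exact ⟨antipodalOverlap p, antipodalOverlap_isSymm p, antipodalOverlap_nonneg p,
    antipodalOverlap_diag p hhalf, sum_antipodalOverlap p hp⟩

theorem stmt2 (n : ℕ) (hn : 3 ≤ n) (p : Fin n → ℝ) (hp : ∀ i, 0 ≤ p i)
    (hcond : ∀ i, p i ≤ ∑ j ∈ Finset.univ.erase i, p j) :
    ∃ U : Matrix (Fin n) (Fin n) ℝ,
      U.IsSymm ∧ (∀ i j, 0 ≤ U i j) ∧ (∀ i, U i i = 0) ∧ ∀ i, ∑ j, U i j = p i :=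
  stmt2_general n p hp hcond
end

section
/- Let G be a graph that contains a vertex i with p_i > 0 such that i has exactly one adversary j and p_i > p_j. Then no balanced equilibrium exists. -/
theorem stmt13 {V : Type*} [Fintype V] [DecidableEq V] (G : SimpleGraph V)
    [DecidableRel G.Adj]
    (p : V → ℝ) (hp : ∀ x, 0 ≤ p x) (i j : V)
    (hnb : G.neighborFinset i = {j}) (hij : p j < p i) :
    ¬ ∃ U : Matrix V V ℝ, U.IsSymm ∧ (∀ a b, 0 ≤ U a b) ∧ (∀ a, U a a = 0) ∧
        (∀ a b, ¬ G.Adj a b → U a b = 0) ∧ ∀ a, ∑ b, U a b = p a := by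
  rintro ⟨U, hsymm, hnn, hdiag, hadj, hrow⟩
  have hij' : i ≠ j := by
    rintro rfl
    exact hij.not_ge le_rfl
  have hzero : ∀ b, b ≠ j → U i b = 0 := by
    intro b hb
    by_cases hbi : b = i
    · rw [hbi]; exact hdiag i
    · apply hadj
      intro h
      have : b ∈ G.neighborFinset i := by
        rw [SimpleGraph.mem_neighborFinset]; exact h
      rw [hnb, Finset.mem_singleton] at this
      exact hb this
  have hpi : p i = U i j := by
    rw [← hrow i]
    rw [Finset.sum_eq_single j]
    · intro b _ hb; exact hzero b hb
    · intro h; exact absurd (Finset.mem_univ j) h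
  have hUji : U j i = U i j := by
    have := hsymm
    rw [Matrix.IsSymm] at this
    exact congrFun (congrFun this.symm j) i
  have hle : U j i ≤ ∑ b, U j b :=
    Finset.single_le_sum (fun b _ => hnn j b) (Finset.mem_univ i)
  rw [hrow j, hUji, ← hpi] at hle
  exact hij.not_ge hle
end

section
/- Let G be a graph on n vertices with powers p, and suppose a balanced equilibrium exists (symmetric nonnegative U supported on edges of the adversary graph, zero diagonal, row sums p on vertices with adversaries). Then for every subset S of vertices with adversaries, ∑_{i ∈ S} p_i = 2·∑_{edges e within S} v_e + ∑_{edges e from S to the complement} v_e, hence ∑_{i ∈ S} p_i ≤ 2·∑_{edges e with an endpoint in S} v_e, and, if S is an independent set in G, ∑_{i ∈ S} p_i ≤ ∑_{j ∈ N(S)} p_j. -/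
open scoped Classical

theorem stmt14 {V : Type*} [Fintype V] [DecidableEq V] (G : SimpleGraph V)
    [DecidableRel G.Adj]
    (p : V → ℝ) (v : Sym2 V → ℝ) (hv : ∀ e, 0 ≤ v e)
    (hsupp : ∀ e, e ∉ G.edgeSet → v e = 0)
    (hrow : ∀ i, ∑ e ∈ G.incidenceFinset i, v e = p i) :
    ∀ S : Finset V,
      (∑ i ∈ S, p i =
        2 * (∑ e ∈ G.edgeFinset.filter (fun e => ∀ x ∈ e, x ∈ S), v e) +
        (∑ e ∈ G.edgeFinset.filter
            (fun e => (∃ x ∈ e, x ∈ S) ∧ ¬ (∀ x ∈ e, x ∈ S)), v e)) ∧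
      (∑ i ∈ S, p i ≤
        2 * ∑ e ∈ G.edgeFinset.filter (fun e => ∃ x ∈ e, x ∈ S), v e) ∧
      ((∀ i ∈ S, ∀ j ∈ S, ¬ G.Adj i j) →
        ∑ i ∈ S, p i ≤ ∑ j ∈ S.biUnion (fun i => G.neighborFinset i), p j) := by
  intro S
  -- abbreviations
  set A := G.edgeFinset.filter (fun e => ∀ x ∈ e, x ∈ S) with hA
  set B := G.edgeFinset.filter
      (fun e => (∃ x ∈ e, x ∈ S) ∧ ¬ (∀ x ∈ e, x ∈ S)) with hB
  -- double counting
  have hrw : ∀ i : V, p i = ∑ e ∈ G.edgeFinset, (if i ∈ e then v e else 0) := by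
    intro i
    rw [← hrow i, G.incidenceFinset_eq_filter, Finset.sum_filter]
  have hswap : ∑ i ∈ S, p i
      = ∑ e ∈ G.edgeFinset, ∑ i ∈ S, (if i ∈ e then v e else 0) := by
    simp_rw [hrw]
    rw [Finset.sum_comm]
  have hkey : ∀ e ∈ G.edgeFinset, (∑ i ∈ S, (if i ∈ e then v e else 0))
      = (if (∀ x ∈ e, x ∈ S) then 2 * v e else
          if (∃ x ∈ e, x ∈ S) then v e else 0) := by
    intro e he
    obtain ⟨a, b⟩ := e
    have hadj : G.Adj a b := by
      rw [SimpleGraph.mem_edgeFinset, SimpleGraph.mem_edgeSet] at he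
      exact he
    have hab : a ≠ b := hadj.ne
    have hsplit : ∀ i : V, (if i ∈ s(a, b) then v s(a, b) else 0)
        = (if i = a then v s(a, b) else 0) + (if i = b then v s(a, b) else 0) := by
      intro i
      by_cases h1 : i = a <;> by_cases h2 : i = b <;>
        simp_all [Sym2.mem_iff]
    simp_rw [hsplit]
    rw [Finset.sum_add_distrib, Finset.sum_ite_eq' S a, Finset.sum_ite_eq' S b]
    by_cases ha : a ∈ S <;> by_cases hb : b ∈ S <;>
      simp [ha, hb, Sym2.mem_iff] <;> ring
  have hmain : ∑ i ∈ S, p i = 2 * (∑ e ∈ A, v e) + ∑ e ∈ B, v e := by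
    rw [hswap, Finset.sum_congr rfl hkey]
    rw [← Finset.sum_filter_add_sum_filter_not G.edgeFinset
      (fun e => ∀ x ∈ e, x ∈ S)]
    have h1 : ∑ e ∈ G.edgeFinset.filter (fun e => ∀ x ∈ e, x ∈ S),
        (if (∀ x ∈ e, x ∈ S) then 2 * v e else
          if (∃ x ∈ e, x ∈ S) then v e else 0) = ∑ e ∈ A, 2 * v e := by
      apply Finset.sum_congr rfl
      intro e he
      rw [Finset.mem_filter] at he
      rw [if_pos he.2]
    have h2 : ∑ e ∈ G.edgeFinset.filter (fun e => ¬ ∀ x ∈ e, x ∈ S),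
        (if (∀ x ∈ e, x ∈ S) then 2 * v e else
          if (∃ x ∈ e, x ∈ S) then v e else 0)
        = ∑ e ∈ B, v e := by
      have step1 : ∀ e ∈ G.edgeFinset.filter (fun e => ¬ ∀ x ∈ e, x ∈ S),
          (if (∀ x ∈ e, x ∈ S) then 2 * v e else
            if (∃ x ∈ e, x ∈ S) then v e else 0)
          = (if (∃ x ∈ e, x ∈ S) then v e else 0) := by
        intro e he
        rw [Finset.mem_filter] at he
        rw [if_neg he.2]
      rw [Finset.sum_congr rfl step1, ← Finset.sum_filter,
        Finset.filter_filter]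
      apply Finset.sum_congr _ (fun _ _ => rfl)
      ext e
      simp only [hB, Finset.mem_filter]
      tauto
    rw [h1, h2, Finset.mul_sum]
  have hAnn : 0 ≤ ∑ e ∈ A, v e := Finset.sum_nonneg fun e _ => hv e
  have hBnn : 0 ≤ ∑ e ∈ B, v e := Finset.sum_nonneg fun e _ => hv e
  refine ⟨hmain, ?_, ?_⟩
  · -- part 2
    have hC : G.edgeFinset.filter (fun e => ∃ x ∈ e, x ∈ S) = A ∪ B := by
      ext e
      obtain ⟨a, b⟩ := e
      have ha : a ∈ s(a, b) := Sym2.mem_mk_left a b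
      simp only [hA, hB, Finset.mem_union, Finset.mem_filter]
      constructor
      · rintro ⟨he, hx⟩
        by_cases h : ∀ x ∈ s(a, b), x ∈ S
        · exact Or.inl ⟨he, h⟩
        · exact Or.inr ⟨he, hx, h⟩
      · rintro (⟨he, h⟩ | ⟨he, hx, -⟩)
        · exact ⟨he, a, ha, h a ha⟩
        · exact ⟨he, hx⟩
    have hdisj : Disjoint A B := by
      rw [hA, hB, Finset.disjoint_filter]
      tauto
    rw [hC, Finset.sum_union hdisj, hmain]
    nlinarith
  · -- part 3
    intro hind
    have hAempty : A = ∅ := by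
      rw [hA, Finset.filter_eq_empty_iff]
      intro e he
      obtain ⟨a, b⟩ := e
      rw [SimpleGraph.mem_edgeFinset, SimpleGraph.mem_edgeSet] at he
      simp only [Sym2.mem_iff]
      intro h
      exact hind a (h a (Or.inl rfl)) b (h b (Or.inr rfl)) he
    rw [hmain, hAempty, Finset.sum_empty, mul_zero, zero_add]
    set T := S.biUnion (fun i => G.neighborFinset i) with hT
    have hTsum : ∑ j ∈ T, p j
        = ∑ e ∈ G.edgeFinset, ∑ j ∈ T, (if j ∈ e then v e else 0) := by
      simp_rw [hrw]
      rw [Finset.sum_comm]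
    have hstep : ∀ e ∈ B, v e ≤ ∑ j ∈ T, (if j ∈ e then v e else 0) := by
      intro e he
      rw [hB, Finset.mem_filter] at he
      obtain ⟨heE, hex, -⟩ := he
      -- find an endpoint of e lying in T
      obtain ⟨j, hje, hjT⟩ : ∃ j, j ∈ e ∧ j ∈ T := by
        obtain ⟨a, b⟩ := e
        rw [SimpleGraph.mem_edgeFinset, SimpleGraph.mem_edgeSet] at heE
        obtain ⟨x, hx, hxS⟩ := hex
        rw [Sym2.mem_iff] at hx
        rcases hx with rfl | rfl
        · exact ⟨b, by simp [Sym2.mem_iff], Finset.mem_biUnion.2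
            ⟨x, hxS, (SimpleGraph.mem_neighborFinset _ _ _).2 heE⟩⟩
        · exact ⟨a, by simp [Sym2.mem_iff], Finset.mem_biUnion.2
            ⟨x, hxS, (SimpleGraph.mem_neighborFinset _ _ _).2 heE.symm⟩⟩
      calc v e = (if j ∈ e then v e else 0) := by rw [if_pos hje]
        _ ≤ ∑ j ∈ T, (if j ∈ e then v e else 0) := by
            apply Finset.single_le_sum (fun k _ => ?_) hjT
            split <;> first | exact hv e | exact le_rfl
    calc ∑ e ∈ B, v e ≤ ∑ e ∈ B, ∑ j ∈ T, (if j ∈ e then v e else 0) :=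
          Finset.sum_le_sum hstep
      _ ≤ ∑ e ∈ G.edgeFinset, ∑ j ∈ T, (if j ∈ e then v e else 0) := by
          apply Finset.sum_le_sum_of_subset_of_nonneg (Finset.filter_subset _ _)
          intro e _ _
          apply Finset.sum_nonneg
          intro k _
          split <;> first | exact hv e | exact le_rfl
      _ = ∑ j ∈ T, p j := hTsum.symm
end

section
/- In an even cycle C_{2k} (k ≥ 2) with vertex powers p1, …, p_{2k}, a balanced equilibrium exists if and only if the alternating sum condition holds: ∑_{i odd} p i = ∑_{i even} p i, and for the edge values defined by alternating partial sums, all values are nonnegative — equivalently there exists t ≥ 0 such that setting v on edges alternately using t yields nonnegative values v_e = t or p_i − (previous value) ≥ 0 around the cycle. -/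
/-!
Record a symmetric matrix supported on the edges of the cycle `ZMod n` by its values
`v i = U i (i + 1)` on the edges `{i, i + 1}`; when `i + 1 ≠ i - 1` the row sums become the
vertex equations `v (i - 1) + v i = p i`. These equations determine `v` from `t = v 0` by the
recursion defining `altVal`, so a solution is the same as a starting value `t` for which the
recursion closes up after `n` steps and all its values are nonnegative. Since
`(-1) ^ m * altVal q t m` is `t` plus a signed partial sum of `q`, for even `n` the recursion
closes up exactly when the alternating sum of `p` vanishes, whatever `t` is.
-/

/-- Alternating edge values around a cycle: `altVal p t 0 = t` and
`altVal p t (m+1) = p (m+1) - altVal p t m`. -/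
def altVal (p : ℕ → ℝ) (t : ℝ) : ℕ → ℝ
  | 0 => t
  | m + 1 => p (m + 1) - altVal p t m

open Finset

theorem neg_one_pow_mul_altVal (q : ℕ → ℝ) (t : ℝ) :
    ∀ m, (-1) ^ m * altVal q t m = t + ∑ j ∈ range m, (-1) ^ (j + 1) * q (j + 1)
  | 0 => by simp [altVal]
  | m + 1 => by
    rw [altVal, sum_range_succ, ← add_assoc, ← neg_one_pow_mul_altVal q t m]
    ring

theorem altVal_of_even {q : ℕ → ℝ} {n : ℕ} (hn : Even n) (hq : q n = q 0) (t : ℝ) :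
    altVal q t n = t + ∑ j ∈ range n, (-1) ^ j * q j := by
  have h := neg_one_pow_mul_altVal q t n
  rw [hn.neg_one_pow, one_mul] at h
  have hshift := sum_range_succ' (fun j => (-1 : ℝ) ^ j * q j) n
  rw [sum_range_succ, hn.neg_one_pow, hq] at hshift
  rw [h]
  linarith

theorem altVal_periodic {q : ℕ → ℝ} {n : ℕ} {t : ℝ} (hq : Function.Periodic q n)
    (ht : altVal q t n = t) : Function.Periodic (altVal q t) n
  | 0 => by rw [zero_add]; exact ht
  | m + 1 => by
    rw [show m + 1 + n = m + n + 1 by omega, altVal, altVal, altVal_periodic hq ht m,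
      show m + n + 1 = m + 1 + n by omega, hq]

theorem sum_range_neg_one_pow_mul {n : ℕ} [NeZero n] (p : ZMod n → ℝ) :
    ∑ j ∈ range n, (-1) ^ j * p j =
      ∑ i ∈ univ.filter (fun i : ZMod n => Even i.val), p i -
        ∑ i ∈ univ.filter (fun i : ZMod n => Odd i.val), p i := by
  have hreindex : ∑ j ∈ range n, (-1) ^ j * p j = ∑ i : ZMod n, (-1) ^ i.val * p i :=
    sum_nbij' (fun j => (j : ZMod n)) ZMod.val (fun _ _ => mem_univ _)
      (fun i _ => mem_range.mpr i.val_lt) (fun _ hj => ZMod.val_cast_of_lt (mem_range.mp hj))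
      (fun i _ => ZMod.natCast_zmod_val i)
      (fun _ hj => by rw [ZMod.val_cast_of_lt (mem_range.mp hj)])
  rw [hreindex, ← sum_filter_add_sum_filter_not univ (fun i : ZMod n => Even i.val),
    sub_eq_add_neg, ← sum_neg_distrib]
  congr 1
  · exact sum_congr rfl fun i hi => by rw [(mem_filter.mp hi).2.neg_one_pow, one_mul]
  · refine sum_congr (filter_congr fun i _ => Nat.not_even_iff_odd) fun i hi => ?_
    rw [(mem_filter.mp hi).2.neg_one_pow, neg_one_mul]

theorem altVal_eq_self_iff {n : ℕ} [NeZero n] (hn : Even n) (p : ZMod n → ℝ) (t : ℝ) :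
    altVal (fun m => p m) t n = t ↔
      ∑ i ∈ univ.filter (fun i : ZMod n => Odd i.val), p i =
        ∑ i ∈ univ.filter (fun i : ZMod n => Even i.val), p i := by
  rw [altVal_of_even hn (by simp) t, sum_range_neg_one_pow_mul, add_eq_left, sub_eq_zero, eq_comm]

theorem altVal_eq_of_add_eq {n : ℕ} {p v : ZMod n → ℝ} (hv : ∀ i, v (i - 1) + v i = p i) :
    ∀ m : ℕ, altVal (fun m => p m) (v 0) m = v m
  | 0 => by simp [altVal]
  | m + 1 => by
    have h := hv (m + 1)
    rw [add_sub_cancel_right] at h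
    simp only [altVal, altVal_eq_of_add_eq hv m, Nat.cast_succ]
    linarith

theorem exists_nonneg_edgeWeights_iff {n : ℕ} [NeZero n] (hn : Even n) (p : ZMod n → ℝ) :
    (∃ v : ZMod n → ℝ, (∀ i, 0 ≤ v i) ∧ ∀ i, v (i - 1) + v i = p i) ↔
      (∑ i ∈ univ.filter (fun i : ZMod n => Odd i.val), p i =
          ∑ i ∈ univ.filter (fun i : ZMod n => Even i.val), p i) ∧
        ∃ t : ℝ, 0 ≤ t ∧ ∀ m < n, 0 ≤ altVal (fun m => p m) t m := by
  constructor
  · rintro ⟨v, hv, hsum⟩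
    have hclose : altVal (fun m => p m) (v 0) n = v 0 := by
      rw [altVal_eq_of_add_eq hsum, ZMod.natCast_self]
    refine ⟨(altVal_eq_self_iff hn p _).mp hclose, v 0, hv 0, fun m _ => ?_⟩
    rw [altVal_eq_of_add_eq hsum]
    exact hv _
  · rintro ⟨hbalance, t, ht, hnonneg⟩
    have hper : Function.Periodic (altVal (fun m => p m) t) n :=
      altVal_periodic (fun m => by simp) ((altVal_eq_self_iff hn p t).mpr hbalance)
    have hcast : ∀ m : ℕ, altVal (fun m => p m) t (m : ZMod n).val = altVal (fun m => p m) t m :=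
      fun m => by rw [ZMod.val_natCast, hper.map_mod_nat]
    refine ⟨fun i => altVal (fun m => p m) t i.val, fun i => hnonneg _ i.val_lt, fun i => ?_⟩
    obtain ⟨m, rfl⟩ : ∃ m : ℕ, ((m + 1 : ℕ) : ZMod n) = i := ⟨(i - 1).val, by simp⟩
    simp only [Nat.cast_succ, add_sub_cancel_right]
    rw [← Nat.cast_succ, hcast, hcast, altVal]
    ring

theorem exists_cycleMatrix_iff_exists_edgeWeights {n : ℕ} [NeZero n] (h2 : (2 : ZMod n) ≠ 0)
    (p : ZMod n → ℝ) :
    (∃ U : Matrix (ZMod n) (ZMod n) ℝ,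
      U.IsSymm ∧ (∀ i j, 0 ≤ U i j) ∧ (∀ i, U i i = 0) ∧
      (∀ i j, ¬ (j = i + 1 ∨ i = j + 1) → U i j = 0) ∧ ∀ i, ∑ j, U i j = p i) ↔
    ∃ v : ZMod n → ℝ, (∀ i, 0 ≤ v i) ∧ ∀ i, v (i - 1) + v i = p i := by
  constructor
  · rintro ⟨U, hsymm, hnonneg, -, hsupp, hrow⟩
    refine ⟨fun i => U i (i + 1), fun i => hnonneg _ _, fun i => ?_⟩
    have hne : i + 1 ≠ i - 1 := fun h => h2 (by linear_combination h)
    have hpair : ∑ j ∈ {i + 1, i - 1}, U i j = p i := by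
      rw [← hrow i]
      refine sum_subset (subset_univ _) fun j _ hj => hsupp i j ?_
      rintro (h | h) <;> simp [h, eq_sub_iff_add_eq] at hj
    rw [sum_pair hne] at hpair
    simp only [sub_add_cancel, hsymm.apply]
    linarith
  · rintro ⟨v, hv, hsum⟩
    have h1 : (1 : ZMod n) ≠ 0 := fun h => h2 (by linear_combination 2 * h)
    refine ⟨fun i j => (if j = i + 1 then v i else 0) + (if i = j + 1 then v j else 0),
      Matrix.IsSymm.ext fun i j => add_comm _ _, fun i j => ?_, fun i => by simp [h1],
      fun i j h => ?_, fun i => ?_⟩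
    · apply add_nonneg <;> split_ifs <;> simp [hv]
    · obtain ⟨hnext, hprev⟩ := not_or.mp h
      simp [hnext, hprev]
    · have hprev (j : ZMod n) : i = j + 1 ↔ i - 1 = j := sub_eq_iff_eq_add.symm
      simp only [hprev, sum_add_distrib, sum_ite_eq, sum_ite_eq', mem_univ, if_true]
      linarith [hsum i]

theorem stmt16 (k : ℕ) (hk : 2 ≤ k) [NeZero (2 * k)] (p : ZMod (2 * k) → ℝ) :
    (∃ U : Matrix (ZMod (2 * k)) (ZMod (2 * k)) ℝ,
      U.IsSymm ∧ (∀ i j, 0 ≤ U i j) ∧ (∀ i, U i i = 0) ∧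
      (∀ i j, ¬ (j = i + 1 ∨ i = j + 1) → U i j = 0) ∧ ∀ i, ∑ j, U i j = p i) ↔
    ((∑ i ∈ Finset.univ.filter (fun i : ZMod (2 * k) => Odd (ZMod.val i)), p i =
        ∑ i ∈ Finset.univ.filter (fun i : ZMod (2 * k) => Even (ZMod.val i)), p i) ∧
      ∃ t : ℝ, 0 ≤ t ∧
        ∀ m < 2 * k, 0 ≤ altVal (fun m => p ((m : ℕ) : ZMod (2 * k))) t m) := by
  have h2 : (2 : ZMod (2 * k)) ≠ 0 := by
    have h2k : ((2 : ℕ) : ZMod (2 * k)) ≠ 0 := by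
      rw [Ne, ZMod.natCast_eq_zero_iff]
      exact fun h => by have := Nat.le_of_dvd two_pos h; omega
    exact_mod_cast h2k
  rw [exists_cycleMatrix_iff_exists_edgeWeights h2, exists_nonneg_edgeWeights_iff (even_two_mul k)]
end

section
/- Let G be bipartite with parts L, R. If a feasible flow f in the network (source s → L with capacities p i, edges L → R with infinite capacity, R → sink t with capacities p j) saturates all source and sink edges, then the assignment u_{ij} = u_{ji} = f(i,j) for edges {i,j} of G, with zero elsewhere and zero diagonal, is a balanced equilibrium: it is symmetric, nonnegative, supported on edges of G, and every vertex's row sum equals its power. -/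
/-!
A flow supported on `L × R` with `L`, `R` disjoint is symmetrized to `f + fᵀ`; at a vertex of `L`
the row sum of `f + fᵀ` is the outflow of the vertex, at a vertex of `R` its inflow, and
saturation makes both equal to the power.
-/

namespace BipartiteFlow

open Finset

variable {V M : Type*} [DecidableEq V] [AddCommMonoid M] {L R : Finset V} {f : V → V → M}

def symmetrize (L R : Finset V) (f : V → V → M) : Matrix V V M := fun x y =>
  if x ∈ L ∧ y ∈ R then f x y else if x ∈ R ∧ y ∈ L then f y x else 0

section Supported

variable (hdisj : Disjoint L R) (hLR : ∀ i j, f i j ≠ 0 → i ∈ L ∧ j ∈ R)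
include hdisj hLR

lemma symmetrize_apply (a b : V) : symmetrize L R f a b = f a b + f b a := by
  have hf : ∀ i j, ¬ (i ∈ L ∧ j ∈ R) → f i j = 0 := fun i j => not_imp_comm.mp (hLR i j)
  unfold symmetrize
  split_ifs with hab hba
  · rw [hf b a fun h => disjoint_left.mp hdisj h.1 hab.2, add_zero]
  · rw [hf a b fun h => disjoint_left.mp hdisj h.1 hba.1, zero_add]
  · rw [hf a b hab, hf b a fun h => hba ⟨h.2, h.1⟩, add_zero]

lemma symmetrize_isSymm : (symmetrize L R f).IsSymm := by
  ext a b
  simp only [Matrix.transpose_apply, symmetrize_apply hdisj hLR, add_comm]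

lemma symmetrize_apply_self (a : V) : symmetrize L R f a a = 0 := by
  have hfaa : f a a = 0 :=
    not_not.mp fun h => disjoint_left.mp hdisj (hLR a a h).1 (hLR a a h).2
  rw [symmetrize_apply hdisj hLR, hfaa, add_zero]

lemma symmetrize_eq_zero_of_not_adj (G : SimpleGraph V) (hG : ∀ i j, f i j ≠ 0 → G.Adj i j)
    {a b : V} (hab : ¬ G.Adj a b) : symmetrize L R f a b = 0 := by
  have hfab : f a b = 0 := not_imp_comm.mp (hG a b) hab
  have hfba : f b a = 0 := not_imp_comm.mp (hG b a) fun h => hab h.symm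
  rw [symmetrize_apply hdisj hLR, hfab, hfba, add_zero]

variable [Fintype V]

lemma sum_symmetrize_of_mem_left {a : V} (ha : a ∈ L) :
    ∑ b, symmetrize L R f a b = ∑ b, f a b := by
  have hfa : ∀ b, f b a = 0 :=
    fun b => not_not.mp fun h => disjoint_left.mp hdisj ha (hLR b a h).2
  simp only [symmetrize_apply hdisj hLR, hfa, add_zero]

lemma sum_symmetrize_of_mem_right {a : V} (ha : a ∈ R) :
    ∑ b, symmetrize L R f a b = ∑ b, f b a := by
  have hfa : ∀ b, f a b = 0 :=
    fun b => not_not.mp fun h => disjoint_left.mp hdisj (hLR a b h).1 ha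
  simp only [symmetrize_apply hdisj hLR, hfa, zero_add]

end Supported

end BipartiteFlow

open BipartiteFlow in
theorem stmt17_general {V : Type*} [Fintype V] [DecidableEq V] (G : SimpleGraph V)
    (L R : Finset V) (hdisj : Disjoint L R) (hcover : ∀ x, x ∈ L ∨ x ∈ R)
    (p : V → ℝ)
    (fs : V → ℝ) (f : V → V → ℝ) (ft : V → ℝ)
    (hf : ∀ i j, 0 ≤ f i j)
    (hsupp : ∀ i j, ¬ (i ∈ L ∧ j ∈ R ∧ G.Adj i j) → f i j = 0)
    (hconsL : ∀ i ∈ L, fs i = ∑ j, f i j)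
    (hconsR : ∀ j ∈ R, ft j = ∑ i, f i j)
    (hsatL : ∀ i ∈ L, fs i = p i) (hsatR : ∀ j ∈ R, ft j = p j) :
    let U : Matrix V V ℝ := fun x y =>
      if x ∈ L ∧ y ∈ R then f x y else if x ∈ R ∧ y ∈ L then f y x else 0
    U.IsSymm ∧ (∀ a b, 0 ≤ U a b) ∧ (∀ a, U a a = 0) ∧
      (∀ a b, ¬ G.Adj a b → U a b = 0) ∧ ∀ a, ∑ b, U a b = p a := by
  have hedge : ∀ i j, f i j ≠ 0 → i ∈ L ∧ j ∈ R ∧ G.Adj i j :=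
    fun i j => not_imp_comm.mp (hsupp i j)
  have hLR : ∀ i j, f i j ≠ 0 → i ∈ L ∧ j ∈ R :=
    fun i j h => ⟨(hedge i j h).1, (hedge i j h).2.1⟩
  intro U
  have hU : U = symmetrize L R f := rfl
  clear_value U
  subst hU
  refine ⟨symmetrize_isSymm hdisj hLR, fun a b => ?_, symmetrize_apply_self hdisj hLR,
    fun a b => symmetrize_eq_zero_of_not_adj hdisj hLR G (fun i j h => (hedge i j h).2.2),
    fun a => ?_⟩
  · rw [symmetrize_apply hdisj hLR]
    exact add_nonneg (hf a b) (hf b a)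
  · rcases hcover a with ha | ha
    · rw [sum_symmetrize_of_mem_left hdisj hLR ha, ← hconsL a ha, hsatL a ha]
    · rw [sum_symmetrize_of_mem_right hdisj hLR ha, ← hconsR a ha, hsatR a ha]

theorem stmt17 {V : Type*} [Fintype V] [DecidableEq V] (G : SimpleGraph V)
    (L R : Finset V) (hdisj : Disjoint L R) (hcover : ∀ x, x ∈ L ∨ x ∈ R)
    (hbip : ∀ i j, G.Adj i j → (i ∈ L ∧ j ∈ R) ∨ (i ∈ R ∧ j ∈ L))
    (p : V → ℝ)
    (fs : V → ℝ) (f : V → V → ℝ) (ft : V → ℝ)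
    (hfs : ∀ i, 0 ≤ fs i) (hf : ∀ i j, 0 ≤ f i j) (hft : ∀ j, 0 ≤ ft j)
    (hcaps : ∀ i, fs i ≤ p i) (hcapt : ∀ j, ft j ≤ p j)
    (hsupp : ∀ i j, ¬ (i ∈ L ∧ j ∈ R ∧ G.Adj i j) → f i j = 0)
    (hconsL : ∀ i ∈ L, fs i = ∑ j, f i j)
    (hconsR : ∀ j ∈ R, ft j = ∑ i, f i j)
    (hsatL : ∀ i ∈ L, fs i = p i) (hsatR : ∀ j ∈ R, ft j = p j) :
    let U : Matrix V V ℝ := fun x y =>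
      if x ∈ L ∧ y ∈ R then f x y else if x ∈ R ∧ y ∈ L then f y x else 0
    U.IsSymm ∧ (∀ a b, 0 ≤ U a b) ∧ (∀ a, U a a = 0) ∧
      (∀ a b, ¬ G.Adj a b → U a b = 0) ∧ ∀ a, ∑ b, U a b = p a :=
  stmt17_general G L R hdisj hcover p fs f ft hf hsupp hconsL hconsR hsatL hsatR
end
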